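/- Let c : E → ℝ be a family of independent random edge costs, each with density bounded by φ, on a simple directed graph with n vertices. The probability that there exist two vertices u, v and two distinct possible u-v paths (paths in some residual-type graph on arcs E ∪ E⁻¹) whose lengths differ by at most ε is bounded above by 2·n^(2n)·ε·φ. -/

import Mathlib

open Finset MeasureTheory ProbabilityTheory
open scoped ENNReal Classical

variable {V : Type*}

def arcsOf (p : List V) : List (V × V) := p.zip p.tail

def Adj (E : Finset (V × V)) (a b : V) : Prop := (a, b) ∈ E ∨ (b, a) ∈ E

noncomputable def arcCost [DecidableEq V] (E : Finset (V × V)) (c : V × V → ℝ) (a b : V) : ℝ :=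
  if (a, b) ∈ E then c (a, b) else - c (b, a)

noncomputable def pathLen [DecidableEq V] (E : Finset (V × V)) (c : V × V → ℝ) (p : List V) : ℝ :=
  ((arcsOf p).map fun ab => arcCost E c ab.1 ab.2).sum

def IsPossiblePath (E : Finset (V × V)) (x y : V) (p : List V) : Prop :=
  List.Chain' (Adj E) p ∧ p.Nodup ∧ p.head? = some x ∧ p.getLast? = some y

def IsPossibleCycle (E : Finset (V × V)) (p : List V) : Prop :=
  2 ≤ p.length ∧ p.Nodup ∧ List.Chain' (Adj E) (p ++ p.take 1)

noncomputable def cycleLen [DecidableEq V] (E : Finset (V × V)) (c : V × V → ℝ) (p : List V) : ℝ :=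
  pathLen E c (p ++ p.take 1)

def ResArc (E : Finset (V × V)) (u f : V × V → ℝ) (a b : V) : Prop :=
  ((a, b) ∈ E ∧ f (a, b) < u (a, b)) ∨ ((b, a) ∈ E ∧ 0 < f (b, a))

def IsResPath (E : Finset (V × V)) (u f : V × V → ℝ) (x y : V) (p : List V) : Prop :=
  List.Chain' (ResArc E u f) p ∧ p.Nodup ∧ p.head? = some x ∧ p.getLast? = some y

def IsResCycle (E : Finset (V × V)) (u f : V × V → ℝ) (p : List V) : Prop :=
  2 ≤ p.length ∧ p.Nodup ∧ List.Chain' (ResArc E u f) (p ++ p.take 1)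

def EmptyArc (E : Finset (V × V)) (u f : V × V → ℝ) (a b : V) : Prop :=
  ResArc E u f a b ∧ ¬ ResArc E u f b a

noncomputable def augment [DecidableEq V] (p : List V) (δ : ℝ) (f : V × V → ℝ) : V × V → ℝ :=
  fun e => f e + (if e ∈ arcsOf p then δ else 0) - (if (e.2, e.1) ∈ arcsOf p then δ else 0)

def Feasible [Fintype V] (E : Finset (V × V)) (u : V × V → ℝ) (s t : V) (f : V × V → ℝ) : Prop :=
  (∀ e, e ∉ E → f e = 0) ∧ (∀ e, 0 ≤ f e ∧ f e ≤ u e) ∧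
    ∀ v, v ≠ s → v ≠ t → (∑ w : V, f (w, v)) = ∑ w : V, f (v, w)

noncomputable def flowValue [Fintype V] (s : V) (f : V × V → ℝ) : ℝ :=
  (∑ w : V, f (s, w)) - ∑ w : V, f (w, s)

noncomputable def flowCost [Fintype V] (c f : V × V → ℝ) : ℝ :=
  ∑ e : V × V, f e * c e

/-- A run of the Successive Shortest Path algorithm with `N` augmentation steps:
flows `F 0 = 0, F 1, …, F N`, augmenting paths `P 0, …, P (N-1)` and augmentation
amounts `δ 0, …, δ (N-1)`. -/
structure SSPRun [Fintype V] [DecidableEq V] (E : Finset (V × V)) (u c : V × V → ℝ)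
    (s t : V) (N : ℕ) (F : ℕ → V × V → ℝ) (P : ℕ → List V) (δ : ℕ → ℝ) : Prop where
  zero : F 0 = fun _ => 0
  feas : ∀ i ≤ N, Feasible E u s t (F i)
  path : ∀ i < N, IsResPath E u (F i) s t (P i)
  shortest : ∀ i < N, ∀ q, IsResPath E u (F i) s t q → pathLen E c (P i) ≤ pathLen E c q
  pos : ∀ i < N, 0 < δ i
  aug : ∀ i < N, F (i + 1) = augment (P i) (δ i) (F i)
  maximal : ∀ i, i + 1 < N → ∃ ab ∈ arcsOf (P i), ¬ ResArc E u (F (i + 1)) ab.1 ab.2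
  final : ∀ q, ¬ IsResPath E u (F N) s t q


/-! ### Auxiliary lemmas -/

section AuxArcs
variable {V : Type*}

lemma arcsOf_cons_cons (x y : V) (l : List V) :
    arcsOf (x :: y :: l) = (x, y) :: arcsOf (y :: l) := rfl

lemma mem_arcsOf : ∀ {p : List V} {a b : V}, (a, b) ∈ arcsOf p → a ∈ p ∧ b ∈ p
  | [], a, b, h => by simp [arcsOf] at h
  | [x], a, b, h => by simp [arcsOf] at h
  | x :: y :: l, a, b, h => by
    rw [arcsOf_cons_cons] at h
    rcases List.mem_cons.1 h with h | h
    · obtain ⟨rfl, rfl⟩ := Prod.mk.injEq _ _ _ _ ▸ h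
      exact ⟨by simp, by simp⟩
    · have := mem_arcsOf h
      exact ⟨List.mem_cons_of_mem _ this.1, List.mem_cons_of_mem _ this.2⟩

lemma arcsOf_nodup {p : List V} (h : p.Nodup) : (arcsOf p).Nodup := by
  have hlen : p.tail.length ≤ p.length := by cases p <;> simp
  have hmap : (arcsOf p).map Prod.snd = p.tail := List.map_snd_zip hlen
  have := h.tail
  rw [← hmap] at this
  exact List.Nodup.of_map Prod.snd this

lemma chain'_of_mem_arcsOf {R : V → V → Prop} :
    ∀ {p : List V}, List.Chain' R p → ∀ {a b : V}, (a, b) ∈ arcsOf p → R a b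
  | [], _, a, b, h => by simp [arcsOf] at h
  | [x], _, a, b, h => by simp [arcsOf] at h
  | x :: y :: l, hc, a, b, h => by
    rw [arcsOf_cons_cons] at h
    rcases List.mem_cons.1 h with h | h
    · obtain ⟨rfl, rfl⟩ := Prod.mk.injEq _ _ _ _ ▸ h
      exact hc.rel_head
    · exact chain'_of_mem_arcsOf hc.tail h

lemma swap_not_mem_arcsOf : ∀ {p : List V}, p.Nodup → ∀ {a b : V},
    (a, b) ∈ arcsOf p → (b, a) ∉ arcsOf p
  | [], _, a, b, h => by simp [arcsOf] at h
  | [x], _, a, b, h => by simp [arcsOf] at h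
  | x :: y :: l, hnd, a, b, h => by
    have hxy : x ∉ y :: l := by simpa using (List.nodup_cons.1 hnd).1
    rw [arcsOf_cons_cons] at h ⊢
    rcases List.mem_cons.1 h with h | h
    · obtain ⟨rfl, rfl⟩ := Prod.mk.injEq _ _ _ _ ▸ h
      intro hmem
      rcases List.mem_cons.1 hmem with h' | h'
      · have h1 : b = a := congrArg Prod.fst h'
        exact hxy (h1 ▸ List.mem_cons_self)
      · exact hxy (mem_arcsOf h').2
    · intro hmem
      rcases List.mem_cons.1 hmem with h' | h'
      · have hb : b = x := congrArg Prod.fst h'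
        exact hxy (hb ▸ (mem_arcsOf h).2)
      · exact swap_not_mem_arcsOf (List.nodup_cons.1 hnd).2 h h'

/-- Two nodup lists with the same head and the same set of arcs are equal. -/
lemma eq_of_arcs : ∀ (p q : List V), p.Nodup → q.Nodup → p.head? = q.head? →
    (∀ ab : V × V, ab ∈ arcsOf p ↔ ab ∈ arcsOf q) → p = q := by
  intro p
  induction p with
  | nil =>
    intro q _ _ hh _
    cases q with
    | nil => rfl
    | cons y t => simp at hh
  | cons x p ih =>
    intro q hp hq hh harc
    cases q with
    | nil => simp at hh
    | cons y t =>
      have hxy : x = y := by simpa using hh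
      subst hxy
      cases p with
      | nil =>
        cases t with
        | nil => rfl
        | cons b t' =>
          exact absurd ((harc (x, b)).2 (by rw [arcsOf_cons_cons]; exact List.mem_cons_self))
            (by simp [arcsOf])
      | cons a p' =>
        cases t with
        | nil =>
          exact absurd ((harc (x, a)).1 (by rw [arcsOf_cons_cons]; exact List.mem_cons_self))
            (by simp [arcsOf])
        | cons b t' =>
          have hxp : x ∉ a :: p' := (List.nodup_cons.1 hp).1
          have hxt : x ∉ b :: t' := (List.nodup_cons.1 hq).1
          have hab : a = b := by
            have h1 : (x, a) ∈ arcsOf (x :: b :: t') :=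
              (harc (x, a)).1 (by rw [arcsOf_cons_cons]; exact List.mem_cons_self)
            rw [arcsOf_cons_cons] at h1
            rcases List.mem_cons.1 h1 with h1 | h1
            · exact (Prod.mk.injEq _ _ _ _ ▸ h1).2.symm ▸ rfl
            · exact absurd (mem_arcsOf h1).1 hxt
          subst hab
          have htail : a :: p' = a :: t' := by
            refine ih (a :: t') (List.nodup_cons.1 hp).2 (List.nodup_cons.1 hq).2 rfl ?_
            intro ab
            constructor
            · intro hmem
              have : ab ∈ arcsOf (x :: a :: t') :=
                (harc ab).1 (by rw [arcsOf_cons_cons]; exact List.mem_cons_of_mem _ hmem)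
              rw [arcsOf_cons_cons] at this
              rcases List.mem_cons.1 this with h1 | h1
              · subst h1; exact absurd (mem_arcsOf hmem).1 hxp
              · exact h1
            · intro hmem
              have : ab ∈ arcsOf (x :: a :: p') :=
                (harc ab).2 (by rw [arcsOf_cons_cons]; exact List.mem_cons_of_mem _ hmem)
              rw [arcsOf_cons_cons] at this
              rcases List.mem_cons.1 this with h1 | h1
              · subst h1; exact absurd (mem_arcsOf hmem).1 hxt
              · exact h1
          rw [htail]

lemma pad_inj_aux [Inhabited V] {n : ℕ} {p q : List V}
    (hq : q.Nodup) (hp0 : p ≠ []) (hq0 : q ≠ [])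
    (hqn : q.length ≤ n) (hlen : p.length ≤ q.length)
    (h : ∀ i : Fin n, p.getD i p.headI = q.getD i q.headI) : p = q := by
  have hp0' : 0 < p.length := List.length_pos_iff.2 hp0
  have hq0' : 0 < q.length := List.length_pos_iff.2 hq0
  have hleneq : p.length = q.length := by
    by_contra hne
    have hlt : p.length < q.length := lt_of_le_of_ne hlen hne
    have hi := h ⟨p.length, lt_of_lt_of_le hlt hqn⟩
    rw [List.getD_eq_default _ _ (le_refl _), List.getD_eq_getElem _ _ hlt] at hi
    have h0 := h ⟨0, lt_of_lt_of_le hq0' hqn⟩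
    rw [List.getD_eq_getElem _ _ hp0', List.getD_eq_getElem _ _ hq0'] at h0
    have hph : p.headI = p[0] := by cases p with | nil => exact absurd rfl hp0 | cons a l => rfl
    have : q[0] = q[p.length] := by rw [← h0, ← hph, hi]
    have := (List.Nodup.getElem_inj_iff hq).1 this
    omega
  refine List.ext_getElem hleneq ?_
  intro i h1 h2
  have := h ⟨i, lt_of_lt_of_le h2 hqn⟩
  rwa [List.getD_eq_getElem _ _ h1, List.getD_eq_getElem _ _ h2] at this

end AuxArcs

section AuxCoef
variable {V : Type*} [DecidableEq V]

/-- The signed coefficient of the (possibly reversed) arc `e` in the path `p`. -/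
def coefZ (p : List V) (e : V × V) : ℤ :=
  ((@List.count (V × V) instBEqOfDecidableEq e (arcsOf p) : ℕ) : ℤ) -
    ((@List.count (V × V) instBEqOfDecidableEq (e.2, e.1) (arcsOf p) : ℕ) : ℤ)

lemma coefZ_cons_cons (x y : V) (l : List V) (e : V × V) :
    coefZ (x :: y :: l) e =
      coefZ (y :: l) e + (if e = (x, y) then 1 else 0) - (if e = (y, x) then 1 else 0) := by
  simp only [coefZ, arcsOf_cons_cons, List.count_cons, instBEqOfDecidableEq, decide_eq_true_eq]
  have h2 : ((x, y) = (e.2, e.1)) = (e = (y, x)) := by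
    simp [Prod.ext_iff, eq_comm, and_comm]
  have h1 : ((x, y) = e) = (e = (x, y)) := by simp [eq_comm]
  simp only [beq_iff_eq, h1, h2]
  push_cast
  ring

lemma pathLen_eq_sum {E : Finset (V × V)} (h2 : ∀ e ∈ E, (e.2, e.1) ∉ E)
    (c : V × V → ℝ) : ∀ (p : List V), List.Chain' (Adj E) p →
    pathLen E c p = ∑ e ∈ E, (coefZ p e : ℝ) * c e
  | [] => by intro _; simp [pathLen, arcsOf, coefZ]
  | [x] => by intro _; simp [pathLen, arcsOf, coefZ]
  | x :: y :: l => by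
    intro hc
    have hadj : Adj E x y := hc.rel_head
    have ih := pathLen_eq_sum h2 c (y :: l) hc.tail
    have hlen : pathLen E c (x :: y :: l) = arcCost E c x y + pathLen E c (y :: l) := by
      simp [pathLen, arcsOf_cons_cons]
    rw [hlen, ih]
    have hsplit : ∀ e ∈ E, (coefZ (x :: y :: l) e : ℝ) * c e =
        (coefZ (y :: l) e : ℝ) * c e +
          ((if e = (x, y) then (1 : ℝ) else 0) * c e - (if e = (y, x) then (1 : ℝ) else 0) * c e) := by
      intro e _
      rw [coefZ_cons_cons]
      push_cast
      split <;> split <;> ring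
    rw [Finset.sum_congr rfl hsplit, Finset.sum_add_distrib, Finset.sum_sub_distrib]
    have e1 : ∑ e ∈ E, (if e = (x, y) then (1 : ℝ) else 0) * c e
        = if (x, y) ∈ E then c (x, y) else 0 := by
      simp only [ite_mul, one_mul, zero_mul]
      exact Finset.sum_ite_eq' E (x, y) c
    have e2 : ∑ e ∈ E, (if e = (y, x) then (1 : ℝ) else 0) * c e
        = if (y, x) ∈ E then c (y, x) else 0 := by
      simp only [ite_mul, one_mul, zero_mul]
      exact Finset.sum_ite_eq' E (y, x) c
    rw [e1, e2]
    unfold arcCost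
    rcases hadj with h | h
    · have : (y, x) ∉ E := h2 (x, y) h
      simp [h, this]
      ring
    · have hxy : (x, y) ∉ E := fun hmem => h2 (x, y) hmem h
      simp [h, hxy]
      ring

lemma count_eq_zero_of_not_mem' {α : Type*} [DecidableEq α] {x : α} {l : List α}
    (h : x ∉ l) : @List.count α instBEqOfDecidableEq x l = 0 :=
  List.count_eq_zero_of_not_mem h

lemma coef_ne_of_arc_mem {E : Finset (V × V)} {p q : List V} {a b : V}
    (hp : p.Nodup) (hadj : Adj E a b)
    (hmem : (a, b) ∈ arcsOf p) (hnmem : (a, b) ∉ arcsOf q) :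
    ∃ e ∈ E, coefZ p e ≠ coefZ q e := by
  have h1 : @List.count (V × V) instBEqOfDecidableEq (a, b) (arcsOf p) = 1 :=
    @List.count_eq_one_of_mem _ instBEqOfDecidableEq _ _ _ (arcsOf_nodup hp) hmem
  have h2 : @List.count (V × V) instBEqOfDecidableEq (b, a) (arcsOf p) = 0 :=
    count_eq_zero_of_not_mem' (swap_not_mem_arcsOf hp hmem)
  have h3 : @List.count (V × V) instBEqOfDecidableEq (a, b) (arcsOf q) = 0 :=
    count_eq_zero_of_not_mem' hnmem
  rcases hadj with h | h
  · refine ⟨(a, b), h, ?_⟩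
    simp only [coefZ, h1, h2, h3]
    omega
  · refine ⟨(b, a), h, ?_⟩
    simp only [coefZ, h1, h2, h3]
    omega

lemma exists_coef_ne {E : Finset (V × V)} {p q : List V}
    (hp : p.Nodup) (hq : q.Nodup)
    (hcp : List.Chain' (Adj E) p) (hcq : List.Chain' (Adj E) q)
    (hh : p.head? = q.head?) (hne : p ≠ q) :
    ∃ e ∈ E, coefZ p e ≠ coefZ q e := by
  have hnall : ¬ ∀ ab : V × V, ab ∈ arcsOf p ↔ ab ∈ arcsOf q :=
    fun h => hne (eq_of_arcs p q hp hq hh h)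
  push_neg at hnall
  obtain ⟨⟨a, b⟩, hab⟩ := hnall
  rcases hab with ⟨hmem, hnq⟩ | ⟨hnp, hq'⟩
  · exact coef_ne_of_arc_mem hp (chain'_of_mem_arcsOf hcp hmem) hmem hnq
  · obtain ⟨e, he, hne'⟩ :=
      coef_ne_of_arc_mem hq (chain'_of_mem_arcsOf hcq hq') hq' hnp
    exact ⟨e, he, hne'.symm⟩

end AuxCoef

/-- The key anticoncentration bound: the probability that a nontrivial integer
combination of independent random variables with densities bounded by `φ` lands
in an interval of length `2 ε` is at most `2 ε φ`. -/
lemma prob_sum_small {I : Type*} {Ω : Type*} [MeasurableSpace Ω]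
    (μ : MeasureTheory.Measure Ω) [MeasureTheory.IsProbabilityMeasure μ]
    (E : Finset I) (c : I → Ω → ℝ) (hmeas : ∀ e, Measurable (c e))
    (hindep : ProbabilityTheory.iIndepFun c μ)
    (g : I → ℝ → ENNReal) (φ : ℝ)
    (hdens : ∀ e ∈ E, μ.map (c e) = MeasureTheory.volume.withDensity (g e))
    (hφ : ∀ e x, g e x ≤ ENNReal.ofReal φ)
    (d : I → ℤ) (e₀ : I) (he₀ : e₀ ∈ E) (hd : d e₀ ≠ 0)
    (ε : ℝ) (hε : 0 < ε) :
    μ {ω | |∑ e ∈ E, (d e : ℝ) * c e ω| ≤ ε} ≤ ENNReal.ofReal (2 * ε) * ENNReal.ofReal φ := by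
  classical
  set a : ℝ := (d e₀ : ℝ) with ha_def
  have ha0 : a ≠ 0 := Int.cast_ne_zero.mpr hd
  have ha1 : 1 ≤ |a| := by
    rw [ha_def, ← Int.cast_abs]
    exact_mod_cast Int.one_le_abs hd
  set X : Ω → ℝ := fun ω => ∑ e ∈ E.erase e₀, (d e : ℝ) * c e ω with hX_def
  have hXmeas : Measurable X := by
    apply Finset.measurable_sum
    exact fun e _ => (hmeas e).const_mul _
  have hYmeas : Measurable (c e₀) := hmeas e₀
  have hind : ProbabilityTheory.IndepFun X (c e₀) μ := by
    set f' : I → Ω → ℝ := fun e => (fun x => if e = e₀ then x else (d e : ℝ) * x) ∘ c e with hf'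
    have h1 : ProbabilityTheory.iIndepFun f' μ := by
      apply hindep.comp
      intro i
      by_cases h : i = e₀
      · simpa [h] using (measurable_id' : Measurable fun x : ℝ => x)
      · simpa [h] using (measurable_id.const_mul ((d i : ℝ)) : Measurable fun x : ℝ => (d i : ℝ) * x)
    have h2 := h1.indepFun_finsetSum_of_notMem
      (fun e => by
        by_cases h : e = e₀
        · simpa [hf', h, Function.comp_def] using hmeas e₀
        · simpa [hf', h, Function.comp_def] using (hmeas e).const_mul (d e : ℝ))
      (Finset.notMem_erase e₀ E)
    have hXeq : (∑ j ∈ E.erase e₀, f' j) = X := by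
      funext ω
      rw [Finset.sum_apply]
      apply Finset.sum_congr rfl
      intro j hj
      have hne : j ≠ e₀ := Finset.ne_of_mem_erase hj
      simp [hf', hne]
    have hYeq : f' e₀ = c e₀ := by funext ω; simp [hf']
    rwa [hXeq, hYeq] at h2
  set s : Set (ℝ × ℝ) := {p : ℝ × ℝ | |p.1 + a * p.2| ≤ ε} with hs_def
  have hs : MeasurableSet s := by
    have : Continuous fun p : ℝ × ℝ => |p.1 + a * p.2| := by continuity
    exact measurableSet_le this.measurable measurable_const
  have hev : {ω | |∑ e ∈ E, (d e : ℝ) * c e ω| ≤ ε}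
      = (fun ω => (X ω, c e₀ ω)) ⁻¹' s := by
    ext ω
    simp only [Set.mem_setOf_eq, Set.mem_preimage, hs_def, Set.mem_setOf_eq]
    rw [← Finset.add_sum_erase E _ he₀]
    rw [add_comm]
  have hmap : μ.map (fun ω => (X ω, c e₀ ω)) = (μ.map X).prod (μ.map (c e₀)) :=
    (ProbabilityTheory.indepFun_iff_map_prod_eq_prod_map_map
      hXmeas.aemeasurable hYmeas.aemeasurable).mp hind
  have hpair : Measurable fun ω => (X ω, c e₀ ω) := hXmeas.prodMk hYmeas
  rw [hev, ← MeasureTheory.Measure.map_apply hpair hs, hmap, MeasureTheory.Measure.prod_apply hs]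
  have hslice : ∀ x : ℝ,
      (μ.map (c e₀)) (Prod.mk x ⁻¹' s) ≤ ENNReal.ofReal (2 * ε) * ENNReal.ofReal φ := by
    intro x
    have hsub : (Prod.mk x ⁻¹' s) ⊆ Set.Icc (-(x / a) - ε) (-(x / a) + ε) := by
      intro y hy
      simp only [hs_def, Set.mem_preimage, Set.mem_setOf_eq] at hy
      have hxy : |y + x / a| ≤ ε := by
        have h1 : |a| * |y + x / a| = |x + a * y| := by
          rw [← abs_mul]
          congr 1
          field_simp
          ring
        nlinarith [abs_nonneg (y + x / a), abs_nonneg (x + a * y)]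
      constructor <;> [linarith [neg_le_of_abs_le hxy]; linarith [le_of_abs_le hxy]]
    calc (μ.map (c e₀)) (Prod.mk x ⁻¹' s)
        ≤ (μ.map (c e₀)) (Set.Icc (-(x / a) - ε) (-(x / a) + ε)) :=
          MeasureTheory.measure_mono hsub
      _ = ∫⁻ y in Set.Icc (-(x / a) - ε) (-(x / a) + ε), g e₀ y := by
          rw [hdens e₀ he₀, MeasureTheory.withDensity_apply _ measurableSet_Icc]
      _ ≤ ∫⁻ _ in Set.Icc (-(x / a) - ε) (-(x / a) + ε), ENNReal.ofReal φ :=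
          MeasureTheory.setLIntegral_mono measurable_const (fun y _ => hφ e₀ y)
      _ = ENNReal.ofReal φ * MeasureTheory.volume (Set.Icc (-(x / a) - ε) (-(x / a) + ε)) := by
          rw [MeasureTheory.setLIntegral_const]
      _ = ENNReal.ofReal (2 * ε) * ENNReal.ofReal φ := by
          rw [Real.volume_Icc]
          rw [mul_comm]
          congr 1
          ring_nf
  calc ∫⁻ x, (μ.map (c e₀)) (Prod.mk x ⁻¹' s) ∂(μ.map X)
      ≤ ∫⁻ _, ENNReal.ofReal (2 * ε) * ENNReal.ofReal φ ∂(μ.map X) :=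
        MeasureTheory.lintegral_mono hslice
    _ = ENNReal.ofReal (2 * ε) * ENNReal.ofReal φ := by
        haveI : MeasureTheory.IsProbabilityMeasure (μ.map X) :=
          MeasureTheory.Measure.isProbabilityMeasure_map hXmeas.aemeasurable
        simp

/-- Lemma 1 (smoothed): the probability that two distinct possible `u`-`v` paths have
lengths within `ε` of each other is at most `2 n^(2n) ε φ`. -/
theorem ssp_two_close_paths_prob {V : Type*} [Fintype V] [DecidableEq V] (n : ℕ)
    (hn : Fintype.card V = n)
    (E : Finset (V × V)) (hsimple : ∀ e ∈ E, e.1 ≠ e.2)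
    (h2cyc : ∀ e ∈ E, (e.2, e.1) ∉ E)
    {Ω : Type*} [MeasurableSpace Ω] (μ : Measure Ω) [IsProbabilityMeasure μ]
    (c : V × V → Ω → ℝ) (hmeas : ∀ e, Measurable (c e))
    (hindep : iIndepFun c μ)
    (g : V × V → ℝ → ENNReal) (φ : ℝ)
    (hdens : ∀ e ∈ E, μ.map (c e) = volume.withDensity (g e))
    (hφ : ∀ e x, g e x ≤ ENNReal.ofReal φ)
    (ε : ℝ) (hε : 0 < ε) :
    μ {ω | ∃ u v : V, ∃ p₁ p₂ : List V, IsPossiblePath E u v p₁ ∧ IsPossiblePath E u v p₂ ∧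
        p₁ ≠ p₂ ∧
        |pathLen E (fun e => c e ω) p₁ - pathLen E (fun e => c e ω) p₂| ≤ ε} ≤
      ENNReal.ofReal (2 * (n : ℝ) ^ (2 * n) * ε * φ) := by
  classical
  rcases isEmpty_or_nonempty V with hV | hV
  · have hempty : {ω : Ω | ∃ u v : V, ∃ p₁ p₂ : List V,
        IsPossiblePath E u v p₁ ∧ IsPossiblePath E u v p₂ ∧ p₁ ≠ p₂ ∧
        |pathLen E (fun e => c e ω) p₁ - pathLen E (fun e => c e ω) p₂| ≤ ε} = ∅ :=
      Set.eq_empty_of_forall_notMem (fun ω ⟨u, _⟩ => (IsEmpty.false u))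
    rw [hempty, measure_empty]
    exact zero_le
  haveI : Inhabited V := Classical.inhabited_of_nonempty hV
  have hn0 : 0 < n := hn ▸ Fintype.card_pos
  set Paths : Finset (List V) :=
    ((Finset.univ : Finset {l : List V // l.Nodup}).image Subtype.val).filter
      (fun p => List.Chain' (Adj E) p ∧ p ≠ []) with hPaths_def
  have hPaths : ∀ p : List V, p ∈ Paths ↔ p.Nodup ∧ List.Chain' (Adj E) p ∧ p ≠ [] := by
    intro p
    constructor
    · intro h
      obtain ⟨h1, h2⟩ := Finset.mem_filter.1 h
      obtain ⟨q, _, rfl⟩ := Finset.mem_image.1 h1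
      exact ⟨q.2, h2⟩
    · rintro ⟨h1, h2, h3⟩
      exact Finset.mem_filter.2 ⟨Finset.mem_image.2 ⟨⟨p, h1⟩, Finset.mem_univ _, rfl⟩, h2, h3⟩
  set S : Finset (List V × List V) :=
    (Paths ×ˢ Paths).filter (fun pq => pq.1.head? = pq.2.head? ∧ pq.1 ≠ pq.2) with hS_def
  set A : List V × List V → Set Ω := fun pq =>
    {ω | |pathLen E (fun e => c e ω) pq.1 - pathLen E (fun e => c e ω) pq.2| ≤ ε} with hA_def
  -- the event is contained in a finite union
  have hsub : {ω : Ω | ∃ u v : V, ∃ p₁ p₂ : List V,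
      IsPossiblePath E u v p₁ ∧ IsPossiblePath E u v p₂ ∧ p₁ ≠ p₂ ∧
      |pathLen E (fun e => c e ω) p₁ - pathLen E (fun e => c e ω) p₂| ≤ ε}
      ⊆ ⋃ pq ∈ S, A pq := by
    rintro ω ⟨u, v, p₁, p₂, ⟨hc1, hn1, hh1, _⟩, ⟨hc2, hn2, hh2, _⟩, hne, hle⟩
    have hne1 : p₁ ≠ [] := by intro h; rw [h] at hh1; simp at hh1
    have hne2 : p₂ ≠ [] := by intro h; rw [h] at hh2; simp at hh2
    have hmem : (p₁, p₂) ∈ S := by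
      rw [hS_def, Finset.mem_filter, Finset.mem_product]
      exact ⟨⟨(hPaths p₁).2 ⟨hn1, hc1, hne1⟩, (hPaths p₂).2 ⟨hn2, hc2, hne2⟩⟩,
        by rw [hh1, hh2], hne⟩
    exact Set.mem_biUnion hmem hle
  -- each elementary event has small probability
  have hterm : ∀ pq ∈ S, μ (A pq) ≤ ENNReal.ofReal (2 * ε) * ENNReal.ofReal φ := by
    rintro ⟨p, q⟩ hpq
    rw [hS_def, Finset.mem_filter, Finset.mem_product] at hpq
    obtain ⟨⟨hpP, hqP⟩, hhead, hne⟩ := hpq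
    obtain ⟨hpn, hpc, -⟩ := (hPaths p).1 hpP
    obtain ⟨hqn, hqc, -⟩ := (hPaths q).1 hqP
    obtain ⟨e₀, he₀, hd0⟩ := exists_coef_ne hpn hqn hpc hqc hhead hne
    have hAeq : A (p, q) =
        {ω | |∑ e ∈ E, ((coefZ p e - coefZ q e : ℤ) : ℝ) * c e ω| ≤ ε} := by
      rw [hA_def]
      ext ω
      simp only [Set.mem_setOf_eq]
      have hsum : pathLen E (fun e => c e ω) p - pathLen E (fun e => c e ω) q
          = ∑ e ∈ E, ((coefZ p e - coefZ q e : ℤ) : ℝ) * c e ω := by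
        rw [pathLen_eq_sum h2cyc _ p hpc, pathLen_eq_sum h2cyc _ q hqc,
          ← Finset.sum_sub_distrib]
        refine Finset.sum_congr rfl fun e _ => ?_
        push_cast
        ring
      rw [hsum]
    rw [hAeq]
    exact prob_sum_small μ E c hmeas hindep g φ hdens hφ
      (fun e => coefZ p e - coefZ q e) e₀ he₀ (sub_ne_zero.2 hd0) ε hε
  -- cardinality bound
  have hcard : S.card ≤ n ^ (2 * n) := by
    have hinj : Set.InjOn (fun pq : List V × List V =>
        ((fun i : Fin n => pq.1.getD i pq.1.headI), fun i : Fin n => pq.2.getD i pq.2.headI))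
        (S : Set (List V × List V)) := by
      intro x hx y hy hxy
      simp only [Finset.coe_filter, Set.mem_setOf_eq, hS_def, Finset.mem_coe,
        Finset.mem_product] at hx hy
      obtain ⟨⟨hx1, hx2⟩, -⟩ := hx
      obtain ⟨⟨hy1, hy2⟩, -⟩ := hy
      obtain ⟨hx1n, -, hx1e⟩ := (hPaths _).1 hx1
      obtain ⟨hx2n, -, hx2e⟩ := (hPaths _).1 hx2
      obtain ⟨hy1n, -, hy1e⟩ := (hPaths _).1 hy1
      obtain ⟨hy2n, -, hy2e⟩ := (hPaths _).1 hy2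
      have hlx1 : x.1.length ≤ n := hn ▸ hx1n.length_le_card
      have hlx2 : x.2.length ≤ n := hn ▸ hx2n.length_le_card
      have hly1 : y.1.length ≤ n := hn ▸ hy1n.length_le_card
      have hly2 : y.2.length ≤ n := hn ▸ hy2n.length_le_card
      have h1 := congrArg Prod.fst hxy
      have h2 := congrArg Prod.snd hxy
      simp only at h1 h2
      have e1 : x.1 = y.1 := by
        rcases le_total x.1.length y.1.length with hle | hle
        · exact pad_inj_aux hy1n hx1e hy1e hly1 hle (fun i => congrFun h1 i)
        · exact (pad_inj_aux hx1n hy1e hx1e hlx1 hle (fun i => (congrFun h1 i).symm)).symm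
      have e2 : x.2 = y.2 := by
        rcases le_total x.2.length y.2.length with hle | hle
        · exact pad_inj_aux hy2n hx2e hy2e hly2 hle (fun i => congrFun h2 i)
        · exact (pad_inj_aux hx2n hy2e hx2e hlx2 hle (fun i => (congrFun h2 i).symm)).symm
      exact Prod.ext e1 e2
    have hle := Finset.card_le_card_of_injOn _
      (fun x _ => Finset.mem_univ (((fun i : Fin n => x.1.getD i x.1.headI),
        fun i : Fin n => x.2.getD i x.2.headI) : (Fin n → V) × (Fin n → V))) hinj
    calc S.card ≤ (Finset.univ : Finset ((Fin n → V) × (Fin n → V))).card := hle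
      _ = n ^ (2 * n) := by
          rw [Finset.card_univ, Fintype.card_prod, Fintype.card_fun,
            Fintype.card_fin, hn, two_mul, pow_add]
  -- putting everything together
  calc μ {ω : Ω | ∃ u v : V, ∃ p₁ p₂ : List V,
      IsPossiblePath E u v p₁ ∧ IsPossiblePath E u v p₂ ∧ p₁ ≠ p₂ ∧
      |pathLen E (fun e => c e ω) p₁ - pathLen E (fun e => c e ω) p₂| ≤ ε}
      ≤ μ (⋃ pq ∈ S, A pq) := measure_mono hsub
    _ ≤ ∑ pq ∈ S, μ (A pq) := measure_biUnion_finset_le S A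
    _ ≤ ∑ _pq ∈ S, (ENNReal.ofReal (2 * ε) * ENNReal.ofReal φ) := Finset.sum_le_sum hterm
    _ = (S.card : ℝ≥0∞) * (ENNReal.ofReal (2 * ε) * ENNReal.ofReal φ) := by
        rw [Finset.sum_const, nsmul_eq_mul]
    _ ≤ ((n ^ (2 * n) : ℕ) : ℝ≥0∞) * (ENNReal.ofReal (2 * ε) * ENNReal.ofReal φ) := by
        exact mul_le_mul_left (by exact_mod_cast hcard) _
    _ ≤ ENNReal.ofReal (2 * (n : ℝ) ^ (2 * n) * ε * φ) := by
        rcases le_or_gt φ 0 with hφ0 | hφ0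
        · have : ENNReal.ofReal φ = 0 := ENNReal.ofReal_eq_zero.2 hφ0
          rw [this, mul_zero, mul_zero]
          exact zero_le
        · have hN : (0 : ℝ) ≤ ((n ^ (2 * n) : ℕ) : ℝ) := by positivity
          rw [← ENNReal.ofReal_natCast, ← ENNReal.ofReal_mul (by positivity),
            ← ENNReal.ofReal_mul (by positivity)]
          apply le_of_eq
          congr 1
          push_cast
          ring
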